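/- Let f : 𝓔 → 𝓖 be an orthogonally a-Jensen mapping. Then for every x ∈ 𝓔 one has (iii) f(a⁻¹·x) + a⁻¹(1−a)·f(0) = a⁻¹·f(x) and (iv) (1−a)⁻¹a·f(0) + f((1−a)⁻¹·x) = (1−a)⁻¹·f(x). -/

import Mathlib

open scoped RightActions

/-- The Dec 2024 Mathlib `CStarModule` (right `Aᵐᵒᵖ`-action, inner product right `A`-linear). -/
class RightCStarModule (A E : Type*) [NonUnitalSemiring A] [StarRing A]
    [Module ℂ A] [AddCommGroup E] [Module ℂ E] [PartialOrder A] [SMul Aᵐᵒᵖ E] [Norm A] [Norm E]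
    extends Inner A E where
  inner_add_right {x} {y} {z} : inner x (y + z) = inner x y + inner x z
  inner_self_nonneg {x} : 0 ≤ inner x x
  inner_self {x} : inner x x = 0 ↔ x = 0
  inner_op_smul_right {a : A} {x y : E} : inner x (y <• a) = inner x y * a
  inner_smul_right_complex {z : ℂ} {x} {y} : inner x (z • y) = z • inner x y
  star_inner x y : star (inner x y) = inner y x
  norm_eq_sqrt_norm_inner_self x : ‖x‖ = √‖inner x x‖

variable {A : Type*} [CStarAlgebra A] [PartialOrder A] [StarOrderedRing A]
variable {E : Type*} [NormedAddCommGroup E] [Module ℂ E] [Module Aᵐᵒᵖ E] [RightCStarModule A E]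
variable {F : Type*} [NormedAddCommGroup F] [Module ℂ F] [Module Aᵐᵒᵖ F] [RightCStarModule A F]
variable {G : Type*} [NormedAddCommGroup G] [Module ℂ G] [Module Aᵐᵒᵖ G] [RightCStarModule A G]

/-- A mapping `f : E → G` between inner product `A`-modules is *orthogonally `a`-Jensen* if
`⟪x, y⟫ = 0` implies `f (a·x + (1-a)·y) = a·f x + (1-a)·f y` (module actions written as right
actions `<•`, since `E`, `G` are right `A`-modules). -/
def OrthAJensen (a : A) (f : E → G) : Prop :=
  ∀ x y : E, inner (𝕜 := A) x y = 0 →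
    f (x <• a + y <• (1 - a)) = f x <• a + f y <• (1 - a)

namespace RightCStarModule

theorem inner_zero_right (x : E) : inner (𝕜 := A) x (0 : E) = 0 := by
  simpa using inner_add_right (A := A) (x := x) (y := (0 : E)) (z := 0)

theorem inner_zero_left (y : E) : inner (𝕜 := A) (0 : E) y = 0 := by
  rw [← star_inner, inner_zero_right, star_zero]

end RightCStarModule

namespace OrthAJensen

variable {a : A} {f : E → G}

omit [Module ℂ G] [RightCStarModule A G]

theorem apply_op_smul (hf : OrthAJensen a f) (x : E) :
    f (x <• a) = f x <• a + f 0 <• (1 - a) := by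
  simpa using hf x 0 (RightCStarModule.inner_zero_right x)

theorem apply_op_smul_one_sub (hf : OrthAJensen a f) (y : E) :
    f (y <• (1 - a)) = f 0 <• a + f y <• (1 - a) := by
  simpa using hf 0 y (RightCStarModule.inner_zero_left y)

theorem apply_op_smul_invOf [Invertible a] (hf : OrthAJensen a f) (x : E) :
    f (x <• ⅟a) + f 0 <• (⅟a * (1 - a)) = f x <• ⅟a := by
  have h := hf.apply_op_smul (x <• ⅟a)
  rw [op_smul_op_smul, invOf_mul_self, MulOpposite.op_one, one_smul] at h
  have hcomm : Commute a (1 - a) := (Commute.one_right a).sub_right (Commute.refl a)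
  rw [h, smul_add, op_smul_op_smul, op_smul_op_smul, mul_invOf_self, MulOpposite.op_one,
    one_smul, hcomm.invOf_left.eq]

theorem apply_op_smul_invOf_one_sub [Invertible (1 - a)] (hf : OrthAJensen a f) (x : E) :
    f 0 <• (⅟(1 - a) * a) + f (x <• ⅟(1 - a)) = f x <• ⅟(1 - a) := by
  have h := hf.apply_op_smul_one_sub (x <• ⅟(1 - a))
  rw [op_smul_op_smul, invOf_mul_self, MulOpposite.op_one, one_smul] at h
  have hcomm : Commute (1 - a) a := (Commute.one_left a).sub_left (Commute.refl a)
  rw [h, smul_add, op_smul_op_smul, op_smul_op_smul, mul_invOf_self, MulOpposite.op_one,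
    one_smul, hcomm.invOf_left.eq]

end OrthAJensen

/-- Lemma 2.1 (iii), (iv): if `f` is orthogonally `a`-Jensen then
`f(a⁻¹·x) + a⁻¹(1-a)·f 0 = a⁻¹·f x` and `(1-a)⁻¹a·f 0 + f((1-a)⁻¹·x) = (1-a)⁻¹·f x`. -/
theorem lemma21_iii_iv (a : A) [Invertible a] [Invertible (1 - a)] (f : E → G)
    (hf : OrthAJensen a f) (x : E) :
    f (x <• (⅟a)) + f 0 <• (⅟a * (1 - a)) = f x <• (⅟a) ∧
    f 0 <• (⅟(1 - a) * a) + f (x <• (⅟(1 - a))) = f x <• (⅟(1 - a)) :=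
  ⟨hf.apply_op_smul_invOf x, hf.apply_op_smul_invOf_one_sub x⟩
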